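/- arXiv:1807.11820 — 5 statements merged into one kernel-verified Lean document; each statement's English description precedes it below -/
import Mathlib

section
/- Let g(z) = 2 cosh z and, for x ≥ 5/3, let Q(x) = {z ∈ ℂ : |Re z - x| < 1, |Im z| < π}. Then g(Q(x)) contains the slit annulus {z ∈ ℂ : (1/2)e^x < |z| < 2e^x} \ (-∞, 0]. -/
/-!
Every `w` is `u + u⁻¹` for a root `u` of `u² - w u + 1` with `‖u‖ ≥ 1`, so `w = 2 cosh z` with
`z = log u` in the half-strip `0 ≤ re z`, `-π < im z ≤ π`; `im z = π` would make `w` a nonpositive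
real. Since `2 sinh (re z) ≤ ‖2 cosh z‖ ≤ 2 cosh (re z)`, the annulus bounds together with
`2 cosh (x - 1) < eˣ / 2` and `2 eˣ < 2 sinh (x + 1)` force `x - 1 < re z < x + 1`.
-/

namespace Complex

theorem sinh_re_le_norm_cosh (z : ℂ) : Real.sinh z.re ≤ ‖cosh z‖ := by
  have h := norm_sub_le_norm_add (exp z) (exp (-z))
  rw [← two_cosh, norm_mul, norm_exp, norm_exp, neg_re] at h
  rw [Real.sinh_eq]
  norm_num at h
  linarith

theorem norm_cosh_le_cosh_re (z : ℂ) : ‖cosh z‖ ≤ Real.cosh z.re := by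
  have h := norm_add_le (exp z) (exp (-z))
  rw [← two_cosh, norm_mul, norm_exp, norm_exp, neg_re] at h
  rw [Real.cosh_eq]
  norm_num at h
  linarith

theorem exists_one_le_norm_add_inv_eq (w : ℂ) : ∃ u : ℂ, 1 ≤ ‖u‖ ∧ u + u⁻¹ = w := by
  have larger_root : ∀ a b : ℂ, a * b = 1 → a + b = w → ‖b‖ ≤ ‖a‖ →
      ∃ u : ℂ, 1 ≤ ‖u‖ ∧ u + u⁻¹ = w := by
    intro a b hab hsum hle
    have hnorm : ‖a‖ * ‖b‖ = 1 := by rw [← norm_mul, hab, norm_one]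
    refine ⟨a, ?_, by rw [inv_eq_of_mul_eq_one_right hab, hsum]⟩
    nlinarith [norm_nonneg b]
  obtain ⟨s, hs⟩ := IsAlgClosed.exists_eq_mul_self (w ^ 2 - 4)
  have hprod : (w + s) / 2 * ((w - s) / 2) = 1 := by linear_combination hs / 4
  rcases le_total ‖(w - s) / 2‖ ‖(w + s) / 2‖ with hle | hle
  · exact larger_root _ _ hprod (by ring) hle
  · exact larger_root _ _ (by rw [mul_comm, hprod]) (by ring) hle

theorem exists_two_mul_cosh_eq (w : ℂ) :
    ∃ z : ℂ, 0 ≤ z.re ∧ -Real.pi < z.im ∧ z.im ≤ Real.pi ∧ 2 * cosh z = w := by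
  obtain ⟨u, hu, rfl⟩ := exists_one_le_norm_add_inv_eq w
  have hu0 : u ≠ 0 := norm_pos_iff.1 (zero_lt_one.trans_le hu)
  refine ⟨log u, ?_, ?_, ?_, ?_⟩
  · rw [log_re]; exact Real.log_nonneg hu
  · rw [log_im]; exact neg_pi_lt_arg u
  · rw [log_im]; exact arg_le_pi u
  · rw [two_cosh, exp_neg, exp_log hu0]

theorem two_mul_cosh_of_im_eq_pi {z : ℂ} (h : z.im = Real.pi) :
    2 * cosh z = ((-(2 * Real.cosh z.re) : ℝ) : ℂ) := by
  have hz : z = z.re + Real.pi * I := Complex.ext (by simp) (by simp [h])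
  rw [hz, cosh_add_pi_mul_I]
  push_cast
  simp

end Complex

namespace Real

theorem two_mul_exp_lt_two_mul_sinh_add_one {x : ℝ} (hx : 0 ≤ x) :
    2 * exp x < 2 * sinh (x + 1) := by
  have he : (2.7182818283 : ℝ) < exp 1 := exp_one_gt_d9
  have hsmall : exp (-(x + 1)) < 1 / 2 := by
    rw [exp_neg, inv_lt_comm₀ (exp_pos _) (by norm_num)]
    linarith [exp_le_exp.2 (by linarith : (1 : ℝ) ≤ x + 1)]
  have hgrowth : 0.7 * exp x < exp x * exp 1 - 2 * exp x := by
    nlinarith [exp_pos x]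
  rw [sinh_eq, exp_add]
  linarith [one_le_exp hx]

theorem two_mul_cosh_sub_one_lt_half_exp {x : ℝ} (hx : 5 / 3 ≤ x) :
    2 * cosh (x - 1) < exp x / 2 := by
  have he : (2.7182818283 : ℝ) < exp 1 := exp_one_gt_d9
  set a := exp (x - 1) with ha
  have ha0 : 0 < a := exp_pos _
  have hsq : exp 1 * (4 / 3) ≤ a ^ 2 := by
    have h3 : (4 / 3 : ℝ) ≤ exp (2 * x - 3) := by
      linarith [add_one_le_exp (2 * x - 3), exp_le_exp.2 (by linarith : (1 / 3 : ℝ) ≤ 2 * x - 3)]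
    rw [ha, ← exp_nat_mul, show ((2 : ℕ) : ℝ) * (x - 1) = 1 + (2 * x - 3) by push_cast; ring, exp_add]
    exact mul_le_mul_of_nonneg_left h3 (exp_pos 1).le
  have hinv : exp (-(x - 1)) * a = 1 := by rw [← exp_add]; simp
  have hx' : exp x = a * exp 1 := by rw [ha, ← exp_add]; ring_nf
  have hb : 4 * exp 1 * exp (-(x - 1)) ≤ 3 * a := by
    nlinarith [exp_pos (-(x - 1))]
  rw [cosh_eq, hx']
  nlinarith

end Real

theorem two_cosh_image_of_rectangle_contains_slit_annulus
    (g : ℂ → ℂ) (hg : ∀ z, g z = 2 * Complex.cosh z)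
    (x : ℝ) (hx : 5/3 ≤ x) :
    {z : ℂ | (1/2) * Real.exp x < ‖z‖ ∧ ‖z‖ < 2 * Real.exp x} \
      {z : ℂ | ∃ t : ℝ, t ≤ 0 ∧ z = (t : ℂ)} ⊆
    g '' {z : ℂ | |z.re - x| < 1 ∧ |z.im| < Real.pi} := by
  rintro w ⟨⟨hlower, hupper⟩, hslit⟩
  obtain ⟨z, hre, him_gt, him_le, rfl⟩ := Complex.exists_two_mul_cosh_eq w
  have hnorm : ‖2 * Complex.cosh z‖ = 2 * ‖Complex.cosh z‖ := by simp
  have hcosh : Real.cosh (x - 1) < Real.cosh z.re := by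
    linarith [Real.two_mul_cosh_sub_one_lt_half_exp hx, Complex.norm_cosh_le_cosh_re z]
  have hsinh : Real.sinh z.re < Real.sinh (x + 1) := by
    linarith [Real.two_mul_exp_lt_two_mul_sinh_add_one (by linarith : 0 ≤ x),
      Complex.sinh_re_le_norm_cosh z]
  rw [Real.cosh_lt_cosh, abs_of_nonneg (by linarith), abs_of_nonneg hre] at hcosh
  rw [Real.sinh_lt_sinh] at hsinh
  have him_ne : z.im ≠ Real.pi := fun h =>
    hslit ⟨_, by linarith [Real.cosh_pos z.re], Complex.two_mul_cosh_of_im_eq_pi h⟩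
  exact ⟨z, ⟨abs_sub_lt_iff.2 ⟨by linarith, by linarith⟩,
    abs_lt.2 ⟨him_gt, him_le.lt_of_ne him_ne⟩⟩, hg z⟩
end

section
/- Let x₀ = 1/2 and x_{n+1} = 2 cosh(x_n) for n ≥ 0. Then x_n > (n!)² for all n ≥ 1, and consequently x_{n+1}/x_n > (n!)² for all n ≥ 1. -/
lemma exp_gt_sq {t : ℝ} (ht : 0 ≤ t) : Real.exp t > t ^ 2 := by
  have h := Real.sum_le_exp_of_nonneg ht 5
  have hs : ∑ i ∈ Finset.range 5, t ^ i / i.factorial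
      = 1 + t + t^2/2 + t^3/6 + t^4/24 := by
    norm_num [Finset.sum_range_succ, Nat.factorial]
    try ring
  rw [hs] at h
  nlinarith [sq_nonneg (t^2 - 6), mul_nonneg ht (sq_nonneg t), sq_nonneg t]

lemma two_cosh_gt_exp (t : ℝ) : 2 * Real.cosh t > Real.exp t := by
  rw [Real.cosh_eq]
  have := Real.exp_pos (-t)
  linarith

lemma two_cosh_ge (t : ℝ) : 2 * Real.cosh t ≥ 2 + t ^ 2 / 2 := by
  rw [Real.cosh_eq]
  have h1 := Real.quadratic_le_exp_of_nonneg (abs_nonneg t)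
  have h2 := Real.add_one_le_exp (-|t|)
  have h3 : Real.exp t + Real.exp (-t) = Real.exp |t| + Real.exp (-|t|) := by
    rcases abs_cases t with ⟨h, _⟩ | ⟨h, _⟩ <;> rw [h] <;> ring_nf
  have h4 : |t| ^ 2 = t ^ 2 := sq_abs t
  nlinarith [abs_nonneg t]

lemma succ_le_factorial {n : ℕ} (hn : 3 ≤ n) : n + 1 ≤ n.factorial := by
  induction n with
  | zero => omega
  | succ m ih =>
    rcases Nat.lt_or_ge m 3 with h | h
    · interval_cases m <;> simp [Nat.factorial] <;> omega
    · have := ih h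
      rw [Nat.factorial_succ]
      nlinarith

theorem reference_orbit_grows_faster_than_factorial_squared
    (x : ℕ → ℝ) (hx0 : x 0 = 1/2) (hx : ∀ n, x (n+1) = 2 * Real.cosh (x n)) :
    ∀ n : ℕ, 1 ≤ n →
      x n > (Nat.factorial n : ℝ)^2 ∧ x (n+1) / x n > (Nat.factorial n : ℝ)^2 := by
  -- positivity
  have hpos : ∀ n, 0 < x n := by
    intro n
    cases n with
    | zero => rw [hx0]; norm_num
    | succ m =>
      rw [hx m]
      have := Real.one_le_cosh (x m)
      linarith
  -- step: x (n+1) > (x n)^2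
  have hstep : ∀ n, x (n+1) > x n ^ 2 := fun n =>
    lt_trans (exp_gt_sq (hpos n).le) (by rw [hx n]; exact two_cosh_gt_exp (x n))
  -- main: x n > (n!)^2 for n ≥ 1
  have hmain : ∀ n, 1 ≤ n → x n > (Nat.factorial n : ℝ)^2 := by
    -- x 1 bound
    have h1 : x 1 ≥ 2 + 1/8 := by
      rw [hx 0, hx0]
      have := two_cosh_ge (1/2)
      norm_num at this ⊢
      linarith
    have h2 : x 2 > 4 := by
      have := two_cosh_ge (x 1)
      rw [hx 1] at *
      nlinarith
    have h3 : x 3 > 36 := by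
      have he : Real.exp (x 2) > 36 := by
        have hm : Real.exp 4 ≤ Real.exp (x 2) := Real.exp_le_exp.mpr (by linarith)
        have h4 : Real.exp 4 = Real.exp 1 ^ 4 := by
          rw [← Real.exp_nat_mul]; norm_num
        have he1 := Real.exp_one_gt_d9
        have hp : (2.7182818283:ℝ)^4 < Real.exp 1 ^ 4 :=
          pow_lt_pow_left₀ he1 (by norm_num) (by norm_num)
        nlinarith
      have := two_cosh_gt_exp (x 2)
      rw [hx 2]
      linarith
    intro n hn
    induction n with
    | zero => omega
    | succ m ih =>
      rcases Nat.lt_or_ge m 3 with h | h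
      · interval_cases m
        · simpa [Nat.factorial] using (by linarith : x 1 > 1)
        · norm_num [Nat.factorial]; linarith
        · norm_num [Nat.factorial]; linarith
      · have him := ih (by omega)
        have hfac : ((m+1).factorial : ℝ)^2 ≤ ((Nat.factorial m : ℝ)^2)^2 := by
          have hle : (m+1).factorial ≤ m.factorial * m.factorial := by
            rw [Nat.factorial_succ]
            exact Nat.mul_le_mul_right _ (succ_le_factorial h)
          have : ((m+1).factorial : ℝ) ≤ (m.factorial : ℝ) * m.factorial := by
            exact_mod_cast hle
          have hnn : (0:ℝ) ≤ ((m+1).factorial : ℝ) := by positivity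
          nlinarith [sq_nonneg ((m.factorial : ℝ) * m.factorial)]
        have := hstep m
        nlinarith [sq_nonneg (Nat.factorial m : ℝ), hpos m]
  intro n hn
  refine ⟨hmain n hn, ?_⟩
  rw [gt_iff_lt, lt_div_iff₀ (hpos n)]
  have h := hmain n hn
  have := hstep n
  nlinarith [hpos n]
end

section
/- Let x₀ = 1/2, x_{n+1} = 2 cosh(x_n), and for n ≥ 3 define d_n = ⌊x_{n+1}/x_n⌋, R_n = (d_n - 1/3)π, and h_n = 2π⌊(x_{n+1} + π)/(2π)⌋. Then for all n ≥ 3, R_n/h_n < 2π/(n!)² and h_{n+1}/h_n > (n!)². -/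
set_option maxHeartbeats 1600000 in
theorem ratio_estimates_Rn_hn
    (x : ℕ → ℝ) (hx0 : x 0 = 1/2) (hx : ∀ n, x (n+1) = 2 * Real.cosh (x n))
    (d : ℕ → ℕ) (hd : ∀ n, d n = ⌊x (n+1) / x n⌋₊)
    (R h : ℕ → ℝ)
    (hR : ∀ n, R n = ((d n : ℝ) - 1/3) * Real.pi)
    (hh : ∀ n, h n = 2 * Real.pi * (⌊(x (n+1) + Real.pi) / (2 * Real.pi)⌋₊ : ℝ)) :
    ∀ n : ℕ, 3 ≤ n →
      R n / h n < 2 * Real.pi / (Nat.factorial n : ℝ)^2 ∧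
      h (n+1) / h n > (Nat.factorial n : ℝ)^2 := by
  have pi_pos := Real.pi_pos
  have pi_lt : Real.pi < 4 := by linarith [Real.pi_lt_d2]
  have hpos : ∀ n, 0 < x n := by
    intro n
    cases n with
    | zero => rw [hx0]; norm_num
    | succ m =>
      rw [hx]
      have := Real.cosh_pos (x m)
      linarith
  have hexp : ∀ n, Real.exp (x n) ≤ x (n+1) := by
    intro n
    rw [hx, Real.cosh_eq]
    have := (Real.exp_pos (-(x n))).le
    linarith
  have hquart : ∀ t : ℝ, 0 ≤ t → t^4/24 ≤ Real.exp t := by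
    intro t ht
    have hs := Real.sum_le_exp_of_nonneg ht 5
    have he : ∑ i ∈ Finset.range 5, t^i / (Nat.factorial i) =
        1 + t + t^2/2 + t^3/6 + t^4/24 := by
      simp [Finset.sum_range_succ, Nat.factorial]
      try ring
    rw [he] at hs
    nlinarith [pow_nonneg ht 2, pow_nonneg ht 3]
  -- base computations
  have hx1 : 2 ≤ x 1 := by
    rw [hx]
    have := Real.one_le_cosh (x 0)
    linarith
  have hx2 : 7 ≤ x 2 := by
    have h1 : Real.exp 2 ≤ Real.exp (x 1) := Real.exp_le_exp.mpr hx1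
    have hs := Real.sum_le_exp_of_nonneg (by norm_num : (0:ℝ) ≤ 2) 6
    have he : ∑ i ∈ Finset.range 6, (2:ℝ)^i / (Nat.factorial i) = 109/15 := by
      simp [Finset.sum_range_succ, Nat.factorial]
      norm_num
    rw [he] at hs
    linarith [hexp 1]
  have hx3 : 100 < x 3 := by
    have h1 : Real.exp (x 2) ≤ x 3 := hexp 2
    have h2 : (x 2)^4/24 ≤ Real.exp (x 2) := hquart _ (by linarith)
    have h3 : (7:ℝ)^4 ≤ (x 2)^4 := pow_le_pow_left₀ (by norm_num) hx2 4
    norm_num at h3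
    linarith
  -- invariant
  have inv : ∀ n, 3 ≤ n → 100 < x n ∧ ((n:ℝ)+1) < x n ∧
      2*(Nat.factorial n : ℝ)^2 < x n := by
    intro n hn
    induction n, hn using Nat.le_induction with
    | base =>
      refine ⟨hx3, by norm_num; linarith, ?_⟩
      norm_num [Nat.factorial]
      linarith
    | succ n hn ih =>
      obtain ⟨h100, hn1, hF⟩ := ih
      have hxp := (hpos n).le
      have h1 : (x n)^4/24 ≤ x (n+1) := le_trans (hquart _ hxp) (hexp n)
      have hFpos : (0:ℝ) < (Nat.factorial n : ℝ)^2 := by positivity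
      have hpow3 : (1000000:ℝ) ≤ x n ^ 3 := by
        have := pow_le_pow_left₀ (by norm_num : (0:ℝ) ≤ 100) h100.le 3
        norm_num at this
        linarith
      have hpow3x : (1000000:ℝ) * x n ≤ x n ^ 3 * x n :=
        mul_le_mul_of_nonneg_right hpow3 hxp
      refine ⟨?_, ?_, ?_⟩
      · nlinarith [hpow3x]
      · push_cast
        nlinarith [hpow3x, hn1]
      · push_cast [Nat.factorial_succ]
        have p1 : ((n:ℝ)+1)^2 < x n^2 := by nlinarith [hn1, h100]
        have p2 : 200*(Nat.factorial n : ℝ)^2 < x n^2 := by nlinarith [hF, h100, hFpos]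
        have p3 : (((n:ℝ)+1)^2) * (200*(Nat.factorial n : ℝ)^2) < x n^2 * x n^2 :=
          mul_lt_mul'' p1 p2 (by positivity) (by positivity)
        nlinarith [p3, h1, hFpos]
  -- floor bounds for h
  have hhb : ∀ m, x (m+1) - Real.pi < h m ∧ h m ≤ x (m+1) + Real.pi := by
    intro m
    have hx1p : 0 < x (m+1) := hpos _
    have h2pi : (0:ℝ) < 2 * Real.pi := by linarith
    have harg : 0 ≤ (x (m+1) + Real.pi) / (2 * Real.pi) := by positivity
    have h1 := Nat.floor_le harg
    have h2 := Nat.lt_floor_add_one ((x (m+1) + Real.pi) / (2 * Real.pi))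
    rw [hh]
    constructor
    · rw [div_lt_iff₀ h2pi] at h2
      nlinarith
    · rw [le_div_iff₀ h2pi] at h1
      nlinarith
  intro n hn
  obtain ⟨ha100, -, haF⟩ := inv n hn
  obtain ⟨hb100, -, hbF⟩ := inv (n+1) (by omega)
  have hFpos : (0:ℝ) < (Nat.factorial n : ℝ)^2 := by positivity
  obtain ⟨hhn1, hhn2⟩ := hhb n
  obtain ⟨hhm1, hhm2⟩ := hhb (n+1)
  have hhnpos : 0 < h n := by linarith
  have hbF' : 32 * (Nat.factorial n : ℝ)^2 ≤ x (n+1) := by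
    have hcast : ((Nat.factorial (n+1) : ℝ))^2 = ((n:ℝ)+1)^2 * (Nat.factorial n : ℝ)^2 := by
      push_cast [Nat.factorial_succ]; ring
    rw [hcast] at hbF
    have hn4 : (4:ℝ) ≤ (n:ℝ)+1 := by
      have : (3:ℝ) ≤ (n:ℝ) := by exact_mod_cast hn
      linarith
    have h16 : (16:ℝ) ≤ ((n:ℝ)+1)^2 := by nlinarith
    have := mul_le_mul_of_nonneg_right h16 hFpos.le
    linarith
  constructor
  · -- R n / h n < 2π/F
    rw [div_lt_div_iff₀ hhnpos hFpos]
    have hD : (d n : ℝ) * x n ≤ x (n+1) := by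
      rw [hd]
      have h0 : (0:ℝ) ≤ x (n+1) / x n := le_of_lt (div_pos (hpos _) (hpos _))
      have h1 := Nat.floor_le h0
      have h2 : (⌊x (n+1)/x n⌋₊:ℝ) * x n ≤ (x (n+1)/x n) * x n :=
        mul_le_mul_of_nonneg_right h1 (hpos n).le
      rwa [div_mul_cancel₀ _ (hpos n).ne'] at h2
    have hD0 : (0:ℝ) ≤ (d n : ℝ) := Nat.cast_nonneg _
    have hDF : (d n : ℝ) * (Nat.factorial n : ℝ)^2 * 2 ≤ x (n+1) := by
      have := mul_le_mul_of_nonneg_left haF.le hD0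
      nlinarith [hD]
    have key : ((d n : ℝ) - 1/3) * (Nat.factorial n : ℝ)^2 < 2 * h n := by
      nlinarith [hDF, hFpos, hhn1, pi_lt, hb100]
    rw [hR]
    calc ((d n : ℝ) - 1/3) * Real.pi * (Nat.factorial n : ℝ)^2
        = (((d n : ℝ) - 1/3) * (Nat.factorial n : ℝ)^2) * Real.pi := by ring
      _ < (2 * h n) * Real.pi := mul_lt_mul_of_pos_right key pi_pos
      _ = 2 * Real.pi * h n := by ring
  · -- h (n+1)/h n > F
    rw [gt_iff_lt, lt_div_iff₀ hhnpos]
    have hc1 : (x (n+1))^4/24 ≤ x (n+2) := le_trans (hquart _ (by linarith)) (hexp (n+1))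
    have hsq : (10000:ℝ) ≤ (x (n+1))^2 := by nlinarith [hb100]
    have hb4 : (10000:ℝ) * (x (n+1))^2 ≤ (x (n+1))^2 * (x (n+1))^2 :=
      mul_le_mul_of_nonneg_right hsq (sq_nonneg _)
    have hpib : Real.pi * x (n+1) < 4 * x (n+1) :=
      mul_lt_mul_of_pos_right pi_lt (by linarith)
    have h1 : (Nat.factorial n : ℝ)^2 * (x (n+1) + Real.pi) ≤
        (x (n+1)/32) * (x (n+1) + Real.pi) := by
      apply mul_le_mul_of_nonneg_right (by linarith) (by linarith)
    have key2 : (Nat.factorial n : ℝ)^2 * (x (n+1) + Real.pi) < x (n+2) - Real.pi := by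
      nlinarith [h1, hc1, hb4, hb100, pi_lt, pi_pos, hpib, sq_nonneg (x (n+1))]
    have hmono : (Nat.factorial n : ℝ)^2 * h n ≤
        (Nat.factorial n : ℝ)^2 * (x (n+1) + Real.pi) :=
      mul_le_mul_of_nonneg_left hhn2 hFpos.le
    have : x (n+1+1) - Real.pi < h (n+1) := hhm1
    linarith [key2, hmono, this]
end

section
/- With d_n, R_n, h_n as defined from the reference orbit of 2 cosh, the series Σ_{n≥3} R_n/h_n converges, and for all n ≥ 3 one has h_n + 3R_n + 6nR_n < (6/(n!)²)(h_{n+1} - 3R_{n+1}). -/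
lemma exp_ge_sq_div_four {t : ℝ} (ht : 0 ≤ t) : t^2/4 ≤ Real.exp t := by
  have h := Real.add_one_le_exp (t/2)
  have h2 : Real.exp (t/2) * Real.exp (t/2) = Real.exp t := by
    rw [← Real.exp_add]; ring_nf
  nlinarith [Real.exp_pos (t/2)]

lemma fact_ge_two_mul : ∀ m : ℕ, 4 ≤ m → 2*(m+1) ≤ Nat.factorial m := by
  intro m hm
  induction m with
  | zero => omega
  | succ k ih =>
    rcases Nat.lt_or_ge k 4 with hk | hk
    · interval_cases k <;> simp_all [Nat.factorial] <;> omega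
    · have := ih (by omega)
      rw [Nat.factorial_succ]
      nlinarith [Nat.factorial_pos k]

lemma two_pow_le_fact : ∀ m : ℕ, 2^m ≤ Nat.factorial (m+1) := by
  intro m
  induction m with
  | zero => simp [Nat.factorial]
  | succ k ih =>
    rw [pow_succ, Nat.factorial_succ]
    nlinarith [Nat.factorial_pos (k+1)]

set_option maxHeartbeats 2000000 in
theorem summability_and_gap_estimates_Rn_hn
    (x : ℕ → ℝ) (hx0 : x 0 = 1/2) (hx : ∀ n, x (n+1) = 2 * Real.cosh (x n))
    (d : ℕ → ℕ) (hd : ∀ n, d n = ⌊x (n+1) / x n⌋₊)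
    (R h : ℕ → ℝ)
    (hR : ∀ n, R n = ((d n : ℝ) - 1/3) * Real.pi)
    (hh : ∀ n, h n = 2 * Real.pi * (⌊(x (n+1) + Real.pi) / (2 * Real.pi)⌋₊ : ℝ)) :
    Summable (fun n : ℕ => R (n + 3) / h (n + 3)) ∧
    ∀ n : ℕ, 3 ≤ n →
      h n + 3 * R n + 6 * n * R n <
        (6 / (Nat.factorial n : ℝ)^2) * (h (n+1) - 3 * R (n+1)) := by
  have hx2 : ∀ n, Real.exp (x n) ≤ x (n+1) := by
    intro n
    rw [hx n, Real.cosh_eq]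
    have := Real.exp_pos (-(x n))
    nlinarith
  have hxpos : ∀ n, 0 < x n := by
    intro n
    cases n with
    | zero => rw [hx0]; norm_num
    | succ k => exact lt_of_lt_of_le (Real.exp_pos (x k)) (hx2 k)
  have hmono : ∀ n, x n < x (n+1) := by
    intro n
    have := Real.add_one_le_exp (x n)
    linarith [hx2 n]
  -- lower bound
  have hlow : ∀ n, 3 ≤ n → ((Nat.factorial (n+1) : ℝ))^2 ≤ x n := by
    intro n hn
    induction n, hn using Nat.le_induction with
    | base =>
      have h1 : (2:ℝ) ≤ x 1 := by
        rw [hx 0]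
        nlinarith [Real.one_le_cosh (x 0)]
      have h2 : (7:ℝ) ≤ x 2 := by
        have : Real.exp 2 ≤ x 2 := le_trans (Real.exp_le_exp.2 h1) (hx2 1)
        have he : (2.7:ℝ)^2 ≤ Real.exp 2 := by
          have h9 := Real.exp_one_gt_d9
          have : Real.exp 2 = Real.exp 1 * Real.exp 1 := by
            rw [← Real.exp_add]; norm_num
          nlinarith [Real.exp_pos 1]
        nlinarith
      have h3 : (576:ℝ) ≤ x 3 := by
        have : Real.exp 7 ≤ x 3 := le_trans (Real.exp_le_exp.2 h2) (hx2 2)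
        have he : (2.7:ℝ)^7 ≤ Real.exp 7 := by
          have h9 := Real.exp_one_gt_d9
          have h7 : Real.exp 7 = (Real.exp 1)^7 := by
            rw [← Real.exp_nat_mul]; norm_num
          rw [h7]
          exact pow_le_pow_left₀ (by norm_num) (by linarith) 7
        nlinarith [this, he]
      norm_num [Nat.factorial]
      linarith
    | succ n hn ih =>
      have hfa : (2*((n:ℝ)+2)) ≤ (Nat.factorial (n+1) : ℝ) := by
        have := fact_ge_two_mul (n+1) (by omega)
        exact_mod_cast this
      have e2 : (x n)^2/4 ≤ Real.exp (x n) := exp_ge_sq_div_four (hxpos n).le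
      have e1 := hx2 n
      have hcast : ((Nat.factorial (n+2) : ℝ))^2 = ((Nat.factorial (n+1):ℝ))^2 * ((n:ℝ)+2)^2 := by
        rw [show n+2 = (n+1)+1 from rfl, Nat.factorial_succ]
        push_cast
        ring
      rw [hcast]
      set F1 : ℝ := (Nat.factorial (n+1) : ℝ) with hF1
      have hfp : (0:ℝ) < F1 := by positivity
      have hsq : 4*((n:ℝ)+2)^2 ≤ F1^2 := by nlinarith
      have hxn2 : (F1^2)^2 ≤ (x n)^2 := by nlinarith [ih, sq_nonneg F1]
      have key : F1^2 * ((n:ℝ)+2)^2 ≤ (F1^2)^2/4 := by nlinarith [sq_nonneg F1]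
      linarith
  have hpi := Real.pi_pos
  have hpi4 := Real.pi_le_four
  have hb1 : ∀ n, h n ≤ x (n+1) + Real.pi := by
    intro n
    rw [hh n]
    have hfl : (⌊(x (n+1) + Real.pi) / (2*Real.pi)⌋₊ : ℝ) ≤ (x (n+1) + Real.pi) / (2*Real.pi) :=
      Nat.floor_le (div_nonneg (by nlinarith [hxpos (n+1)]) (by nlinarith))
    calc 2 * Real.pi * (⌊(x (n+1) + Real.pi) / (2*Real.pi)⌋₊ : ℝ)
        ≤ 2 * Real.pi * ((x (n+1) + Real.pi) / (2*Real.pi)) := by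
          exact mul_le_mul_of_nonneg_left hfl (by positivity)
      _ = x (n+1) + Real.pi := by field_simp
  have hb2 : ∀ n, x (n+1) - Real.pi < h n := by
    intro n
    rw [hh n]
    have hfl := Nat.lt_floor_add_one ((x (n+1) + Real.pi) / (2*Real.pi))
    have h2 : x (n+1) + Real.pi < 2*Real.pi * ((⌊(x (n+1) + Real.pi) / (2*Real.pi)⌋₊ : ℝ) + 1) := by
      rw [← div_lt_iff₀' (by positivity)]
      exact hfl
    nlinarith
  have hd1 : ∀ n, (d n : ℝ) * x n ≤ x (n+1) := by
    intro n
    rw [hd n]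
    have hfl : (⌊x (n+1) / x n⌋₊ : ℝ) ≤ x (n+1) / x n :=
      Nat.floor_le (div_nonneg (hxpos (n+1)).le (hxpos n).le)
    rw [← le_div_iff₀ (hxpos n)]
    exact hfl
  have hd2 : ∀ n, 1 ≤ d n := by
    intro n
    rw [hd n]
    refine Nat.le_floor ?_
    rw [Nat.cast_one, le_div_iff₀ (hxpos n), one_mul]
    exact (hmono n).le
  have hRpos : ∀ n, 0 ≤ R n := by
    intro n
    rw [hR n]
    have : (1:ℝ) ≤ (d n : ℝ) := by exact_mod_cast hd2 n
    nlinarith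
  have hRb : ∀ n, R n * x n ≤ Real.pi * x (n+1) := by
    intro n
    rw [hR n]
    have h1 : ((d n : ℝ) - 1/3) * x n ≤ (d n : ℝ) * x n := by
      nlinarith [hxpos n]
    nlinarith [hd1 n, hxpos n]
  have hxbig : ∀ m, 3 ≤ m → (576:ℝ) ≤ x m := by
    intro m hm
    have h1 := hlow m hm
    have h2 : (24:ℝ) ≤ (Nat.factorial (m+1) : ℝ) := by
      have : Nat.factorial 4 ≤ Nat.factorial (m+1) := Nat.factorial_le (by omega)
      norm_num [Nat.factorial] at this ⊢
      exact_mod_cast this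
    nlinarith
  have hhalf : ∀ m, 3 ≤ m → x (m+1) / 2 ≤ h m := by
    intro m hm
    have h1 := hb2 m
    have h2 : (576:ℝ) ≤ x (m+1) := hxbig (m+1) (by omega)
    nlinarith
  constructor
  · refine Summable.of_nonneg_of_le (f := fun n : ℕ => 2 * Real.pi * (1/2:ℝ)^n) ?_ ?_ ?_
    · intro n
      have h2 : (576:ℝ) ≤ x (n+4) := hxbig (n+4) (by omega)
      have h3 : x (n+4)/2 ≤ h (n+3) := hhalf (n+3) (by omega)
      exact div_nonneg (hRpos (n+3)) (by linarith)
    · intro n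
      have h2 : (576:ℝ) ≤ x (n+4) := hxbig (n+4) (by omega)
      have h3 : x (n+4)/2 ≤ h (n+3) := hhalf (n+3) (by omega)
      have hhp : (0:ℝ) < h (n+3) := by linarith
      have hxm : (2:ℝ)^(n+3) ≤ x (n+3) := by
        have t1 : (2:ℕ)^(n+3) ≤ Nat.factorial (n+4) := two_pow_le_fact (n+3)
        have t2 : (Nat.factorial (n+4) : ℝ) ≤ ((Nat.factorial (n+4)):ℝ)^2 := by
          have : (1:ℝ) ≤ (Nat.factorial (n+4) : ℝ) := by
            exact_mod_cast Nat.one_le_iff_ne_zero.2 (Nat.factorial_ne_zero _)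
          nlinarith
        have t3 := hlow (n+3) (by omega)
        have t1' : ((2:ℝ))^(n+3) ≤ (Nat.factorial (n+4) : ℝ) := by exact_mod_cast t1
        linarith
      have hstep : R (n+3) / h (n+3) ≤ 2 * Real.pi / 2^(n+3) := by
        rw [div_le_div_iff₀ hhp (by positivity)]
        have e1 : R (n+3) * 2^(n+3) ≤ R (n+3) * x (n+3) :=
          mul_le_mul_of_nonneg_left hxm (hRpos (n+3))
        have e2 := hRb (n+3)
        nlinarith
      refine hstep.trans ?_
      have e3 : (2:ℝ)^n ≤ 2^(n+3) := pow_le_pow_right₀ (by norm_num) (by omega)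
      show 2 * Real.pi / 2^(n+3) ≤ 2 * Real.pi * (1/2:ℝ) ^ n
      rw [div_pow, one_pow, mul_one_div]
      exact div_le_div_of_nonneg_left (by positivity) (by positivity) e3
    · exact (summable_geometric_two).mul_left _
  · intro n hn
    have hn3 : (3:ℝ) ≤ (n:ℝ) := by exact_mod_cast hn
    have hFpos : (0:ℝ) < (Nat.factorial n : ℝ)^2 := by positivity
    have hF36 : (36:ℝ) ≤ (Nat.factorial n : ℝ)^2 := by
      have h6 : Nat.factorial 3 ≤ Nat.factorial n := Nat.factorial_le hn
      have h6' : (6:ℝ) ≤ (Nat.factorial n : ℝ) := by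
        norm_num [Nat.factorial] at h6
        exact_mod_cast h6
      nlinarith
    have haF : (Nat.factorial n : ℝ)^2 * ((n:ℝ)+1)^2 ≤ x n := by
      have e : ((Nat.factorial (n+1):ℝ))^2 = (Nat.factorial n:ℝ)^2 * ((n:ℝ)+1)^2 := by
        rw [Nat.factorial_succ]; push_cast; ring
      have := hlow n hn
      linarith [e ▸ this]
    have hbF : (Nat.factorial n : ℝ)^2 * (((n:ℝ)+1)^2 * ((n:ℝ)+2)^2) ≤ x (n+1) := by
      have e : ((Nat.factorial (n+2):ℝ))^2
          = (Nat.factorial n:ℝ)^2 * (((n:ℝ)+1)^2 * ((n:ℝ)+2)^2) := by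
        rw [show n+2 = (n+1)+1 from rfl, Nat.factorial_succ, Nat.factorial_succ]
        push_cast; ring
      have := hlow (n+1) (by omega)
      linarith [e ▸ this]
    have hcexp : x (n+1)^2/4 ≤ x (n+2) :=
      le_trans (exp_ge_sq_div_four (hxpos (n+1)).le) (hx2 (n+1))
    have h16 : (16:ℝ) ≤ ((n:ℝ)+1)^2 := by nlinarith
    have h25 : (25:ℝ) ≤ ((n:ℝ)+2)^2 := by nlinarith
    have hnn : (400:ℝ) ≤ ((n:ℝ)+1)^2 * ((n:ℝ)+2)^2 := by
      calc (400:ℝ) = 16 * 25 := by norm_num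
        _ ≤ ((n:ℝ)+1)^2 * ((n:ℝ)+2)^2 :=
            mul_le_mul h16 h25 (by norm_num) (by positivity)
    have hb400 : 400 * (Nat.factorial n : ℝ)^2 ≤ x (n+1) := by
      have t := mul_le_mul_of_nonneg_left hnn hFpos.le
      linarith [hbF]
    have hb14400 : (14400:ℝ) ≤ x (n+1) := by nlinarith [hb400, hF36]
    have key1 : (3 + 6*(n:ℝ)) * Real.pi ≤ x n := by
      nlinarith [mul_nonneg (sub_nonneg.2 hF36) (sq_nonneg ((n:ℝ)+1))]
    have key2 : (3 + 6*(n:ℝ)) * R n ≤ x (n+1) := by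
      have h1 : ((3 + 6*(n:ℝ)) * R n) * x n ≤ x (n+1) * x n := by
        calc ((3 + 6*(n:ℝ)) * R n) * x n = (3 + 6*(n:ℝ)) * (R n * x n) := by ring
          _ ≤ (3 + 6*(n:ℝ)) * (Real.pi * x (n+1)) := by
              apply mul_le_mul_of_nonneg_left (hRb n) (by linarith)
          _ = ((3 + 6*(n:ℝ)) * Real.pi) * x (n+1) := by ring
          _ ≤ x n * x (n+1) := mul_le_mul_of_nonneg_right key1 (hxpos (n+1)).le
          _ = x (n+1) * x n := mul_comm _ _
      exact le_of_mul_le_mul_right h1 (hxpos n)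
    have hLHS : h n + 3 * R n + 6 * (n:ℝ) * R n ≤ 3 * x (n+1) := by
      have := hb1 n
      nlinarith [key2]
    have key4 : 3 * R (n+1) ≤ x (n+2) / 4 := by
      have h1 : (3 * R (n+1)) * x (n+1) ≤ (x (n+2)/4) * x (n+1) := by
        have e2 := hRb (n+1)
        nlinarith [hxpos (n+2)]
      exact le_of_mul_le_mul_right h1 (hxpos (n+1))
    have key5 : Real.pi ≤ x (n+2)/4 := by
      have := hmono (n+1)
      nlinarith
    have hX : x (n+2)/2 < h (n+1) - 3 * R (n+1) := by
      have := hb2 (n+1)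
      nlinarith
    have hRHS : 3 * x (n+1) < (6 / (Nat.factorial n : ℝ)^2) * (h (n+1) - 3 * R (n+1)) := by
      rw [div_mul_eq_mul_div, lt_div_iff₀ hFpos]
      have p1 : 400 * (Nat.factorial n : ℝ)^2 * x (n+1) ≤ x (n+1) * x (n+1) :=
        mul_le_mul_of_nonneg_right hb400 (hxpos (n+1)).le
      nlinarith [mul_pos hFpos (hxpos (n+1)), hX, hcexp]
    linarith
end

section
/- Define x₀ = 1/2, x_{n+1} = 2 cosh(x_n), d_n = ⌊x_{n+1}/x_n⌋, and for any constant C₅ > 0 let ρ_{n+1} = exp(-(n+1)C₅ - Σ_{j=0}^{n} x_j - x_n). Then there exists N₁ ∈ ℕ such that (1/2)^{2d_n} < ρ_{n+1} for all n ≥ N₁. -/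
theorem power_half_eventually_less_than_inner_radius
    (x : ℕ → ℝ) (hx0 : x 0 = 1/2) (hx : ∀ n, x (n+1) = 2 * Real.cosh (x n))
    (d : ℕ → ℕ) (hd : ∀ n, d n = ⌊x (n+1) / x n⌋₊)
    (C₅ : ℝ) (hC₅ : 0 < C₅) (ρ : ℕ → ℝ)
    (hρ : ∀ n : ℕ, ρ (n+1) =
      Real.exp (-((n : ℝ) + 1) * C₅ - (∑ j ∈ Finset.range (n+1), x j) - x n)) :
    ∃ N₁ : ℕ, ∀ n : ℕ, N₁ ≤ n → (1/2 : ℝ)^(2 * d n) < ρ (n+1) := by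
  -- basic facts
  have hexp : ∀ n, Real.exp (x n) ≤ x (n+1) := by
    intro n
    rw [hx n, Real.cosh_eq]
    have := Real.exp_pos (-(x n))
    linarith
  have hlb : ∀ n : ℕ, (n : ℝ) + 1/2 ≤ x n := by
    intro n
    induction n with
    | zero => simp [hx0]
    | succ k ih =>
      have h1 := Real.add_one_le_exp (x k)
      have h2 := hexp k
      push_cast
      linarith
  have hpos : ∀ n, 0 < x n := by
    intro n
    have := hlb n
    have : (0:ℝ) ≤ (n:ℝ) := Nat.cast_nonneg n
    linarith [hlb n]
  have hmono : Monotone x := by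
    apply monotone_nat_of_le_succ
    intro n
    have h1 := Real.add_one_le_exp (x n)
    have h2 := hexp n
    linarith
  refine ⟨⌈256*(2*C₅+5)⌉₊ + 1, fun n hn => ?_⟩
  have hxp := hpos n
  have hn1 : (1:ℕ) ≤ n := le_trans (Nat.le_add_left 1 _) hn
  have hx1 : (1:ℝ) ≤ x n := by
    have := hlb n
    have : (1:ℝ) ≤ (n:ℝ) := by exact_mod_cast hn1
    linarith [hlb n]
  have hK : 256*(2*C₅+5) < x n := by
    have h1 : (256*(2*C₅+5) : ℝ) ≤ ⌈256*(2*C₅+5)⌉₊ := Nat.le_ceil _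
    have h2 : ((⌈256*(2*C₅+5)⌉₊ : ℝ) + 1) ≤ (n : ℝ) := by exact_mod_cast hn
    linarith [hlb n]
  -- exp lower bound: x^4/256 ≤ exp x
  have he4 : (x n)^4 / 256 ≤ Real.exp (x n) := by
    have h4 : x n / 4 + 1 ≤ Real.exp (x n / 4) := by
      linarith [Real.add_one_le_exp (x n / 4)]
    have hq : (Real.exp (x n / 4))^4 = Real.exp (x n) := by
      rw [← Real.exp_nat_mul]; norm_num; ring_nf
    have hnn : (0:ℝ) ≤ x n / 4 := by linarith
    have hp : (x n / 4)^4 ≤ (Real.exp (x n / 4))^4 := by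
      apply pow_le_pow_left₀ hnn
      linarith
    nlinarith [hp]
  -- floor bound
  have hdq : x (n+1) / x n < (d n : ℝ) + 1 := by
    rw [hd]
    exact_mod_cast Nat.lt_floor_add_one (x (n+1) / x n)
  have hq1 : (x n)^3 / 256 ≤ x (n+1) / x n := by
    have h1 : (x n)^3 / 256 = ((x n)^4 / 256) / x n := by
      field_simp
    rw [h1]
    gcongr
    exact le_trans he4 (hexp n)
  have hd1 : (x n)^3 / 256 - 1 < (d n : ℝ) := by linarith
  -- sum bound
  have hS : ∑ j ∈ Finset.range (n+1), x j ≤ ((n:ℝ)+1) * x n := by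
    calc ∑ j ∈ Finset.range (n+1), x j ≤ ∑ _j ∈ Finset.range (n+1), x n :=
          Finset.sum_le_sum fun j hj => hmono (Nat.lt_succ_iff.mp (Finset.mem_range.mp hj))
      _ = ((n:ℝ)+1) * x n := by
          rw [Finset.sum_const, Finset.card_range]; push_cast; ring
  have hn2 : (n : ℝ) + 1 ≤ 2 * x n := by linarith [hlb n]
  -- key polynomial inequality
  have hkey : ((n:ℝ)+1)*C₅ + ((n:ℝ)+1)*(x n) + x n ≤ (x n)^3 / 256 - 1 := by
    nlinarith [mul_pos (sub_pos.2 hK) (pow_pos hxp 2),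
      mul_nonneg (by linarith : (0:ℝ) ≤ 2 * x n - ((n:ℝ)+1)) hC₅.le,
      mul_nonneg (by linarith : (0:ℝ) ≤ 2 * x n - ((n:ℝ)+1)) hxp.le,
      mul_nonneg (by nlinarith : (0:ℝ) ≤ (x n)^2 - x n) hC₅.le,
      sq_nonneg (x n), hx1]
  have hlog : (1:ℝ)/2 < Real.log 2 := by
    have := Real.log_two_gt_d9; linarith
  have hdnn : (0:ℝ) ≤ (d n : ℝ) := Nat.cast_nonneg _
  have hdl : (d n : ℝ) ≤ 2 * (d n : ℝ) * Real.log 2 := by nlinarith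
  -- convert the goal
  rw [hρ n]
  have hpow : ((1:ℝ)/2)^(2 * d n) = Real.exp (-(2 * (d n : ℝ)) * Real.log 2) := by
    rw [← Real.exp_log (show (0:ℝ) < 1/2 by norm_num), ← Real.exp_nat_mul]
    congr 1
    rw [one_div, Real.log_inv]
    push_cast; ring
  rw [hpow, Real.exp_lt_exp]
  nlinarith [hS, hkey, hd1, hdl]
end
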